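/- Let E be a regular sublinear expectation on the space X of bounded measurable real-valued functions on (Ω, F). Then for every linear expectation L dominated by E, the set function μ(A) := L(1_A) is a (countably additive) probability measure on (Ω, F); in particular μ(Ω) = 1 and μ(A_n) ↓ 0 for every sequence of measurable sets A_n ↓ ∅. -/

import Mathlib

open MeasureTheory Set Filter Topology Classical

/-- The space of bounded measurable real-valued functions on `Ω`, as a submodule of `Ω → ℝ`. -/
def BM (Ω : Type*) [MeasurableSpace Ω] : Submodule ℝ (Ω → ℝ) where
  carrier := {f | Measurable f ∧ ∃ M : ℝ, ∀ ω, |f ω| ≤ M}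
  zero_mem' := ⟨measurable_const, 0, by simp⟩
  add_mem' := by
    rintro f g ⟨hf, Mf, hMf⟩ ⟨hg, Mg, hMg⟩
    exact ⟨hf.add hg, Mf + Mg, fun ω => (abs_add_le _ _).trans (add_le_add (hMf ω) (hMg ω))⟩
  smul_mem' := by
    rintro c f ⟨hf, Mf, hMf⟩
    refine ⟨hf.const_smul c, |c| * Mf, fun ω => ?_⟩
    simp only [Pi.smul_apply, smul_eq_mul, abs_mul]
    exact mul_le_mul_of_nonneg_left (hMf ω) (abs_nonneg c)

variable {Ω : Type*} [MeasurableSpace Ω]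

lemma mem_BM {f : Ω → ℝ} (hf : Measurable f) (M : ℝ) (hM : ∀ ω, |f ω| ≤ M) : f ∈ BM Ω :=
  ⟨hf, M, hM⟩

lemma BM.measurable (ξ : BM Ω) : Measurable (ξ : Ω → ℝ) := ξ.2.1

lemma BM.bounded (ξ : BM Ω) : ∃ M : ℝ, ∀ ω, |(ξ : Ω → ℝ) ω| ≤ M := ξ.2.2

/-- A sublinear expectation on the space of bounded measurable functions. -/
structure SLE (Ω : Type*) [MeasurableSpace Ω] where
  E : BM Ω → ℝ
  mono : ∀ ξ η : BM Ω, (∀ ω, (η : Ω → ℝ) ω ≤ (ξ : Ω → ℝ) ω) → E η ≤ E ξ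
  const_preserve : ∀ (c : ℝ) (h : (fun _ : Ω => c) ∈ BM Ω), E ⟨fun _ => c, h⟩ = c
  subadd : ∀ ξ η : BM Ω, E (ξ + η) ≤ E ξ + E η
  pos_homog : ∀ (c : ℝ), 0 ≤ c → ∀ ξ : BM Ω, E (c • ξ) = c * E ξ

/-- The constant function as an element of `BM Ω`. -/
def constBM (Ω : Type*) [MeasurableSpace Ω] (c : ℝ) : BM Ω :=
  ⟨fun _ => c, mem_BM measurable_const |c| fun _ => le_refl _⟩

/-- The indicator function of a measurable set as an element of `BM Ω`. -/
noncomputable def indBM {Ω : Type*} [MeasurableSpace Ω] (A : Set Ω) (hA : MeasurableSet A) : BM Ω :=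
  ⟨A.indicator fun _ => 1,
    mem_BM (measurable_const.indicator hA) 1 fun ω => by
      by_cases h : ω ∈ A <;> simp [Set.indicator_apply, h]⟩

/-- The product of two bounded measurable functions. -/
noncomputable def mulBM (ξ η : BM Ω) : BM Ω := by
  refine ⟨fun ω => (ξ : Ω → ℝ) ω * (η : Ω → ℝ) ω, ?_⟩
  obtain ⟨Mf, hMf⟩ := BM.bounded ξ
  obtain ⟨Mg, hMg⟩ := BM.bounded η
  refine mem_BM ((BM.measurable ξ).mul (BM.measurable η)) (max Mf 0 * max Mg 0) fun ω => ?_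
  rw [abs_mul]
  exact mul_le_mul ((hMf ω).trans (le_max_left _ _)) ((hMg ω).trans (le_max_left _ _))
    (abs_nonneg _) (le_max_right _ _)

/-- The upper capacity associated to a sublinear expectation: `C(A) = E(1_A)` for measurable `A`
(junk value `0` on non-measurable sets). -/
noncomputable def SLE.cap (𝔼 : SLE Ω) (A : Set Ω) : ℝ :=
  if h : MeasurableSet A then 𝔼.E (indBM A h) else 0

/-- The lower capacity associated to a sublinear expectation: `c(A) = -E(-1_A)` for measurable `A`
(junk value `0` on non-measurable sets). -/
noncomputable def SLE.lcap (𝔼 : SLE Ω) (A : Set Ω) : ℝ :=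
  if h : MeasurableSet A then -𝔼.E (-(indBM A h)) else 0

/-- A linear expectation dominated by the sublinear expectation `𝔼`. -/
def Dominated (𝔼 : SLE Ω) (L : BM Ω →ₗ[ℝ] ℝ) : Prop := ∀ ξ : BM Ω, L ξ ≤ 𝔼.E ξ

/-- `ξ` and `η` are uncorrelated with respect to `𝔼` if `L(ξη) = L(ξ)L(η)` for every
linear expectation `L` dominated by `𝔼`. -/
def Uncorrelated (𝔼 : SLE Ω) (ξ η : BM Ω) : Prop :=
  ∀ L : BM Ω →ₗ[ℝ] ℝ, Dominated 𝔼 L → L (mulBM ξ η) = L ξ * L η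

/-- `𝔼` is regular: if `ξ n ↓ 0` pointwise then `𝔼.E (ξ n) ↓ 0`. -/
def SLE.Regular (𝔼 : SLE Ω) : Prop :=
  ∀ ξ : ℕ → BM Ω, (∀ ω, Antitone fun n => (ξ n : Ω → ℝ) ω) →
    (∀ ω, Tendsto (fun n => (ξ n : Ω → ℝ) ω) atTop (𝓝 0)) →
    Tendsto (fun n => 𝔼.E (ξ n)) atTop (𝓝 0)

/-- The σ-field generated by `ξ a, …, ξ b`. -/
def sigmaGen (ξ : ℕ → BM Ω) (a b : ℕ) : MeasurableSpace Ω :=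
  ⨆ i ∈ Set.Icc a b, MeasurableSpace.comap (fun ω => (ξ i : Ω → ℝ) ω) inferInstance

/-- `{ξ_n}_{n ≥ 1}` is an independent sequence under `𝔼`: pairwise uncorrelated, and
`C(A ∩ B) ≤ C(A) C(B)` whenever `A ∈ σ(ξ_1, …, ξ_m)` and `B ∈ σ(ξ_{m+1}, …, ξ_n)`, `m < n`. -/
def IndepSeq (𝔼 : SLE Ω) (ξ : ℕ → BM Ω) : Prop :=
  (∀ i j, 1 ≤ i → 1 ≤ j → i ≠ j → Uncorrelated 𝔼 (ξ i) (ξ j)) ∧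
  ∀ m n : ℕ, 1 ≤ m → m < n → ∀ A B : Set Ω,
    MeasurableSet[sigmaGen ξ 1 m] A → MeasurableSet[sigmaGen ξ (m + 1) n] B →
    𝔼.cap (A ∩ B) ≤ 𝔼.cap A * 𝔼.cap B

/-- Assumption (H₀): for every disjoint measurable cover `{A_n}` of `Ω`,
the series `Σ C(A_n)` has bounded partial sums. -/
def H0 (𝔼 : SLE Ω) : Prop :=
  ∀ A : ℕ → Set Ω, (∀ n, MeasurableSet (A n)) → Pairwise (Function.onFun Disjoint A) →
    (⋃ n, A n) = Set.univ → ∃ M : ℝ, ∀ N : ℕ, ∑ n ∈ Finset.range N, 𝔼.cap (A n) < M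

/-! `L` is positive because `𝔼` is monotone, and `L 1 = 1` because `L (±1) ≤ 𝔼 (±1) = ±1`.
If `A n ↓ ∅` then `0 ≤ L (1_{A n}) ≤ 𝔼 (1_{A n}) → 0` by regularity; countable additivity
follows, since by linearity the partial sums of `L (1_{A n})` differ from `L (1_{⋃ A})` by the
mass of the tails `⋃ A \ (A 0 ∪ ⋯ ∪ A (N - 1)) ↓ ∅`. -/

namespace SLE

variable (𝔼 : SLE Ω)

lemma E_const (c : ℝ) : 𝔼.E (constBM Ω c) = c :=
  𝔼.const_preserve c _

lemma E_nonpos {ξ : BM Ω} (hξ : ∀ ω, (ξ : Ω → ℝ) ω ≤ 0) : 𝔼.E ξ ≤ 0 :=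
  (𝔼.mono (constBM Ω 0) ξ hξ).trans (𝔼.E_const 0).le

end SLE

lemma neg_constBM (c : ℝ) : -constBM Ω c = constBM Ω (-c) := rfl

lemma indBM_univ : indBM (univ : Set Ω) MeasurableSet.univ = constBM Ω 1 :=
  Subtype.ext (indicator_univ _)

lemma indBM_diff {A B : Set Ω} (hA : MeasurableSet A) (hB : MeasurableSet B) (hBA : B ⊆ A) :
    indBM (A \ B) (hA.diff hB) = indBM A hA - indBM B hB :=
  Subtype.ext (indicator_sdiff hBA _)

lemma indBM_biUnion_finset {ι : Type*} (s : Finset ι) {A : ι → Set Ω}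
    (hA : ∀ i, MeasurableSet (A i)) (hdisj : (s : Set ι).PairwiseDisjoint A) :
    indBM (⋃ i ∈ s, A i) (s.measurableSet_biUnion fun i _ => hA i) =
      ∑ i ∈ s, indBM (A i) (hA i) := by
  ext ω
  simp only [Submodule.coe_sum, Finset.sum_apply]
  exact Finset.indicator_biUnion_apply s A (f := fun _ => (1 : ℝ)) hdisj ω

namespace Dominated

variable {𝔼 : SLE Ω} {L : BM Ω →ₗ[ℝ] ℝ} (hL : Dominated 𝔼 L)
include hL

lemma nonneg {ξ : BM Ω} (hξ : ∀ ω, 0 ≤ (ξ : Ω → ℝ) ω) : 0 ≤ L ξ := by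
  have : L (-ξ) ≤ 0 := (hL (-ξ)).trans (𝔼.E_nonpos fun ω => neg_nonpos.2 (hξ ω))
  rwa [map_neg, neg_nonpos] at this

lemma map_const (c : ℝ) : L (constBM Ω c) = c := by
  have hneg := hL (constBM Ω (-c))
  rw [𝔼.E_const, ← neg_constBM, map_neg] at hneg
  exact le_antisymm ((hL _).trans (𝔼.E_const c).le) (neg_le_neg_iff.1 hneg)

lemma map_indBM_nonneg {A : Set Ω} (hA : MeasurableSet A) : 0 ≤ L (indBM A hA) :=
  hL.nonneg (indicator_nonneg fun _ _ => zero_le_one)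

lemma tendsto_zero_of_regular (hreg : 𝔼.Regular) {ξ : ℕ → BM Ω}
    (hanti : ∀ ω, Antitone fun n => (ξ n : Ω → ℝ) ω)
    (hlim : ∀ ω, Tendsto (fun n => (ξ n : Ω → ℝ) ω) atTop (𝓝 0)) :
    Tendsto (fun n => L (ξ n)) atTop (𝓝 0) :=
  have hnonneg : ∀ n ω, 0 ≤ (ξ n : Ω → ℝ) ω := fun n ω =>
    (hanti ω).le_of_tendsto (hlim ω) n
  squeeze_zero (fun n => hL.nonneg (hnonneg n)) (fun n => hL (ξ n)) (hreg ξ hanti hlim)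

lemma tendsto_map_indBM_of_antitone (hreg : 𝔼.Regular) {A : ℕ → Set Ω}
    (hA : ∀ n, MeasurableSet (A n)) (hanti : Antitone A) (hempty : ⋂ n, A n = ∅) :
    Tendsto (fun n => L (indBM (A n) (hA n))) atTop (𝓝 0) := by
  refine hL.tendsto_zero_of_regular hreg
    (fun ω m n hmn => indicator_le_indicator_of_subset (hanti hmn) (fun _ => zero_le_one) ω)
    fun ω => ?_
  have := (hanti.tendsto_indicator A (fun _ => (1 : ℝ)) ω).mono_right (pure_le_nhds _)
  rwa [hempty, indicator_empty] at this

lemma hasSum_map_indBM (hreg : 𝔼.Regular) {A : ℕ → Set Ω} (hA : ∀ n, MeasurableSet (A n))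
    (hdisj : Pairwise (Function.onFun Disjoint A)) :
    HasSum (fun n => L (indBM (A n) (hA n)))
      (L (indBM (⋃ n, A n) (MeasurableSet.iUnion hA))) := by
  set S := ⋃ n, A n
  have hS : MeasurableSet S := MeasurableSet.iUnion hA
  set B : ℕ → Set Ω := fun N => ⋃ n ∈ Finset.range N, A n
  have hB N : MeasurableSet (B N) := (Finset.range N).measurableSet_biUnion fun n _ => hA n
  have hBS N : B N ⊆ S := iUnion₂_subset fun n _ => subset_iUnion A n
  have hBunion : ⋃ N, B N = S := (iUnion_subset hBS).antisymm <| iUnion_subset fun n =>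
    (subset_biUnion_of_mem (Finset.self_mem_range_succ n)).trans (subset_iUnion B (n + 1))
  have htail := hL.tendsto_map_indBM_of_antitone hreg (fun N => hS.diff (hB N))
    (fun m n hmn => sdiff_subset_sdiff_right (biUnion_subset_biUnion_left (by simpa using hmn)))
    (by rw [← sdiff_iUnion, hBunion, sdiff_self])
  have hpartial N : ∑ n ∈ Finset.range N, L (indBM (A n) (hA n)) =
      L (indBM S hS) - L (indBM (S \ B N) (hS.diff (hB N))) := by
    rw [indBM_diff hS (hB N) (hBS N), map_sub, sub_sub_cancel, ← map_sum,
      ← indBM_biUnion_finset _ hA (hdisj.set_pairwise _)]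
  rw [hasSum_iff_tendsto_nat_of_nonneg fun n => hL.map_indBM_nonneg (hA n)]
  simpa only [hpartial, sub_zero] using tendsto_const_nhds.sub htail

end Dominated

/-- If `𝔼` is regular, then for every linear expectation `L` dominated by `𝔼`,
`μ(A) := L(1_A)` is a countably additive probability measure; in particular `μ(Ω) = 1` and
`μ(A_n) ↓ 0` whenever `A_n ↓ ∅`. -/
theorem dominated_is_probability (𝔼 : SLE Ω) (hreg : 𝔼.Regular)
    (L : BM Ω →ₗ[ℝ] ℝ) (hL : Dominated 𝔼 L) :
    (∀ (A : Set Ω) (hA : MeasurableSet A), 0 ≤ L (indBM A hA)) ∧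
    L (indBM Set.univ MeasurableSet.univ) = 1 ∧
    (∀ (A : ℕ → Set Ω) (hA : ∀ n, MeasurableSet (A n)),
      Pairwise (Function.onFun Disjoint A) →
      HasSum (fun n => L (indBM (A n) (hA n)))
        (L (indBM (⋃ n, A n) (MeasurableSet.iUnion hA)))) ∧
    (∀ (A : ℕ → Set Ω) (hA : ∀ n, MeasurableSet (A n)), Antitone A → (⋂ n, A n) = ∅ →
      Tendsto (fun n => L (indBM (A n) (hA n))) atTop (𝓝 0)) :=
  ⟨fun _ hA => hL.map_indBM_nonneg hA,
    by rw [indBM_univ, hL.map_const],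
    fun _ hA hdisj => hL.hasSum_map_indBM hreg hA hdisj,
    fun _ hA hanti hempty => hL.tendsto_map_indBM_of_antitone hreg hA hanti hempty⟩
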